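/- Let X and Y be G-spaces and f : X → X, h : Y → Y be pseudoequivariant and G-minimal. Then the closure of (G × G)_{f × h}(x, y) equals (closure of G_f(x)) × (closure of G_h(y)) for all x ∈ X, y ∈ Y if and only if for all g, k ∈ G, x ∈ X, y ∈ Y, both (g • f(x), y) and (x, k • h(y)) belong to the closure of (G × G)_{f × h}(x, y). -/

import Mathlib

open Pointwise

/-- `f` is pseudoequivariant: `f(G • x) = G • f(x)` for every `x ∈ X`. -/
def Pseudoequivariant {G X : Type*} [Group G] [MulAction G X] (f : X → X) : Prop :=
  ∀ x : X, f '' (MulAction.orbit G x) = MulAction.orbit G (f x)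

/-- The `G_f`-orbit of `x`: the set `{g • f^[k] x : g ∈ G, k ≥ 0}`. -/
def GfOrbit {G X : Type*} [Group G] [MulAction G X] (f : X → X) (x : X) : Set X :=
  {y | ∃ (g : G) (k : ℕ), g • f^[k] x = y}

/-- `f` is `G`-minimal if every `G_f`-orbit is dense in `X`. -/
def GMinimal {G X : Type*} [Group G] [MulAction G X] [TopologicalSpace X]
    (f : X → X) : Prop :=
  ∀ x : X, closure (GfOrbit (G := G) f x) = Set.univ

/-- The `(G × G)_{f × h}`-orbit of `(x, y)`:
the set `{(g • f^[k] x, g' • h^[k] y) : g, g' ∈ G, k ≥ 0}`. -/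
def ProdGfOrbit {G X Y : Type*} [Group G] [MulAction G X] [MulAction G Y]
    (f : X → X) (h : Y → Y) (p : X × Y) : Set (X × Y) :=
  {q | ∃ (g g' : G) (k : ℕ), q = (g • f^[k] p.1, g' • h^[k] p.2)}

/-! Under the hypothesis, the closure `C` of the product orbit of `(x, y)` is invariant under
`G × G` acting coordinatewise and under `f` and `h` acting on one coordinate at a time. Hence each
horizontal slice `{a | (a, b) ∈ C}` is a closed, `G`- and `f`-invariant subset of `X`, which by
minimality is empty or everything, and likewise for vertical slices. Since `(x, y) ∈ C`, the slice
through `y` is all of `X`, and then every vertical slice is all of `Y`. -/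

open Set

section Orbit

variable {G X Y : Type*} [Group G] [MulAction G X] [MulAction G Y] {f : X → X} {h : Y → Y}

theorem Pseudoequivariant.iterate (hf : Pseudoequivariant (G := G) f) (k : ℕ) :
    Pseudoequivariant (G := G) f^[k] := by
  induction k with
  | zero => intro x; simp
  | succ k ih =>
    intro x
    rw [Function.iterate_succ, image_comp, hf x, ih (f x), Function.comp_apply]

theorem Pseudoequivariant.map_smul_mem_orbit (hf : Pseudoequivariant (G := G) f) (g : G) (x : X) :
    f (g • x) ∈ MulAction.orbit G (f x) :=
  hf x ▸ mem_image_of_mem f (MulAction.mem_orbit x g)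

theorem smul_iterate_mem_prodGfOrbit (hpef : Pseudoequivariant (G := G) f)
    (hpeh : Pseudoequivariant (G := G) h) {p q : X × Y} (hq : q ∈ ProdGfOrbit (G := G) f h p)
    (g g' : G) (k : ℕ) : (g • f^[k] q.1, g' • h^[k] q.2) ∈ ProdGfOrbit (G := G) f h p := by
  obtain ⟨a, b, m, rfl⟩ := hq
  obtain ⟨a', ha⟩ := (hpef.iterate k).map_smul_mem_orbit a (f^[m] p.1)
  obtain ⟨b', hb⟩ := (hpeh.iterate k).map_smul_mem_orbit b (h^[m] p.2)
  refine ⟨g * a', g' * b', k + m, ?_⟩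
  simp only [← ha, ← hb, mul_smul, Function.iterate_add_apply]

variable [TopologicalSpace X] [TopologicalSpace Y] [ContinuousConstSMul G X]
  [ContinuousConstSMul G Y]

theorem smul_iterate_mem_closure_prodGfOrbit (hf : Continuous f) (hh : Continuous h)
    (hpef : Pseudoequivariant (G := G) f) (hpeh : Pseudoequivariant (G := G) h) {p q : X × Y}
    (hq : q ∈ closure (ProdGfOrbit (G := G) f h p)) (g g' : G) (k : ℕ) :
    (g • f^[k] q.1, g' • h^[k] q.2) ∈ closure (ProdGfOrbit (G := G) f h p) := by
  have hcont : Continuous fun q : X × Y => (g • f^[k] q.1, g' • h^[k] q.2) :=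
    ((hf.iterate k).comp continuous_fst).const_smul g |>.prodMk <|
      ((hh.iterate k).comp continuous_snd).const_smul g'
  exact MapsTo.closure (fun _ hq => smul_iterate_mem_prodGfOrbit hpef hpeh hq g g' k) hcont hq

theorem closure_prodGfOrbit_subset (hf : Continuous f) (hh : Continuous h)
    (hpef : Pseudoequivariant (G := G) f) (hpeh : Pseudoequivariant (G := G) h) {p q : X × Y}
    (hq : q ∈ closure (ProdGfOrbit (G := G) f h p)) :
    closure (ProdGfOrbit (G := G) f h q) ⊆ closure (ProdGfOrbit (G := G) f h p) := by
  refine closure_minimal ?_ isClosed_closure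
  rintro _ ⟨g, g', k, rfl⟩
  exact smul_iterate_mem_closure_prodGfOrbit hf hh hpef hpeh hq g g' k

end Orbit

theorem GMinimal.eq_univ {G X : Type*} [Group G] [MulAction G X] [TopologicalSpace X]
    {f : X → X} (hmin : GMinimal (G := G) f) {s : Set X} (hs : IsClosed s)
    (hsmul : ∀ g : G, ∀ x ∈ s, g • x ∈ s) (hfs : MapsTo f s s) (hne : s.Nonempty) :
    s = univ := by
  obtain ⟨x, hx⟩ := hne
  have horbit : GfOrbit (G := G) f x ⊆ s := by
    rintro _ ⟨g, k, rfl⟩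
    exact hsmul g _ (hfs.iterate k hx)
  exact eq_univ_of_univ_subset (hmin x ▸ closure_minimal horbit hs)

theorem prodGfOrbit_closure_eq_prod_iff_general {G X Y : Type*} [Group G] [TopologicalSpace G]
    [TopologicalSpace X] [MulAction G X] [ContinuousSMul G X]
    [TopologicalSpace Y] [MulAction G Y] [ContinuousSMul G Y]
    (f : X → X) (h : Y → Y) (hf : Continuous f) (hh : Continuous h)
    (hpef : Pseudoequivariant (G := G) f) (hpeh : Pseudoequivariant (G := G) h)
    (hminf : GMinimal (G := G) f) (hminh : GMinimal (G := G) h) :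
    (∀ (x : X) (y : Y), closure (ProdGfOrbit (G := G) f h (x, y)) =
      (closure (GfOrbit (G := G) f x)) ×ˢ (closure (GfOrbit (G := G) h y))) ↔
      (∀ (g k : G) (x : X) (y : Y),
        (g • f x, y) ∈ closure (ProdGfOrbit (G := G) f h (x, y)) ∧
        (x, k • h y) ∈ closure (ProdGfOrbit (G := G) f h (x, y))) := by
  refine ⟨fun H g k x y => by simp [H x y, hminf x, hminh y], fun H x y => ?_⟩
  rw [hminf x, hminh y, univ_prod_univ]
  set C := closure (ProdGfOrbit (G := G) f h (x, y))
  have hxy : (x, y) ∈ C := subset_closure ⟨1, 1, 0, by simp⟩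
  have hsmul (q) (hq : q ∈ C) (g k : G) : (g • q.1, q.2) ∈ C ∧ (q.1, k • q.2) ∈ C := by
    constructor
    · simpa using smul_iterate_mem_closure_prodGfOrbit hf hh hpef hpeh hq g 1 0
    · simpa using smul_iterate_mem_closure_prodGfOrbit hf hh hpef hpeh hq 1 k 0
  have hmap (q) (hq : q ∈ C) : (f q.1, q.2) ∈ C ∧ (q.1, h q.2) ∈ C := by
    have hsub := closure_prodGfOrbit_subset hf hh hpef hpeh hq
    obtain ⟨hfq, hhq⟩ := H 1 1 q.1 q.2
    simpa using And.intro (hsub hfq) (hsub hhq)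
  have hrow : {a | (a, y) ∈ C} = univ :=
    hminf.eq_univ (isClosed_closure.preimage (.prodMk_left y))
      (fun g _ ha => (hsmul _ ha g 1).1) (fun _ ha => (hmap _ ha).1) ⟨x, hxy⟩
  refine eq_univ_of_forall fun ⟨a, b⟩ => ?_
  have hcol : {b | (a, b) ∈ C} = univ :=
    hminh.eq_univ (isClosed_closure.preimage (.prodMk_right a))
      (fun k _ hb => (hsmul _ hb 1 k).2) (fun _ hb => (hmap _ hb).2)
      ⟨y, eq_univ_iff_forall.1 hrow a⟩
  exact eq_univ_iff_forall.1 hcol b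

/-- Let `X`, `Y` be `G`-spaces and `f : X → X`, `h : Y → Y` be pseudoequivariant
`G`-minimal maps. Then the closure of the `(G × G)_{f × h}`-orbit of `(x, y)` equals
`closure (G_f(x)) × closure (G_h(y))` for all `x, y` iff for all `g, k ∈ G`, `x ∈ X`,
`y ∈ Y`, both `(g • f x, y)` and `(x, k • h y)` lie in the closure of the
`(G × G)_{f × h}`-orbit of `(x, y)`. -/
theorem prodGfOrbit_closure_eq_prod_iff {G X Y : Type*} [Group G] [TopologicalSpace G]
    [IsTopologicalGroup G] [TopologicalSpace X] [MulAction G X] [ContinuousSMul G X]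
    [TopologicalSpace Y] [MulAction G Y] [ContinuousSMul G Y]
    (f : X → X) (h : Y → Y) (hf : Continuous f) (hh : Continuous h)
    (hpef : Pseudoequivariant (G := G) f) (hpeh : Pseudoequivariant (G := G) h)
    (hminf : GMinimal (G := G) f) (hminh : GMinimal (G := G) h) :
    (∀ (x : X) (y : Y), closure (ProdGfOrbit (G := G) f h (x, y)) =
      (closure (GfOrbit (G := G) f x)) ×ˢ (closure (GfOrbit (G := G) h y))) ↔
      (∀ (g k : G) (x : X) (y : Y),
        (g • f x, y) ∈ closure (ProdGfOrbit (G := G) f h (x, y)) ∧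
        (x, k • h y) ∈ closure (ProdGfOrbit (G := G) f h (x, y))) :=
  prodGfOrbit_closure_eq_prod_iff_general f h hf hh hpef hpeh hminf hminh
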